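/- In IKt2, the distribution axiom □(A→B) → ◊A → ◊B is derivable, where ◊A := ∀X(□(A→■X)→X). -/
import Mathlib


namespace SOTense

/-- Formulas of second-order tense logic: propositional symbols, de Bruijn
second-order variables, implication, □, ■, and second-order ∀. -/
inductive Fm : Type where
  | pr : ℕ → Fm
  | var : ℕ → Fm
  | imp : Fm → Fm → Fm
  | box : Fm → Fm
  | bbox : Fm → Fm
  | all : Fm → Fm

namespace Fm

/-- Shift de Bruijn variables ≥ c by one. -/
def lift (c : ℕ) : Fm → Fm
  | pr p => pr p
  | var n => if n < c then var n else var (n + 1)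
  | imp A B => imp (A.lift c) (B.lift c)
  | box A => box (A.lift c)
  | bbox A => bbox (A.lift c)
  | all A => all (A.lift (c + 1))

/-- Substitute C for de Bruijn variable k. -/
def subst : Fm → ℕ → Fm → Fm
  | pr p, _, _ => pr p
  | var n, k, C => if n < k then var n else if n = k then C else var (n - 1)
  | imp A B, k, C => imp (A.subst k C) (B.subst k C)
  | box A, k, C => box (A.subst k C)
  | bbox A, k, C => bbox (A.subst k C)
  | all A, k, C => all (A.subst (k + 1) (C.lift 0))

/-- A[C/X]: instantiate the outermost bound variable of the body A with C. -/
def inst (A C : Fm) : Fm := A.subst 0 C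

/-- The propositional symbol P occurs in the formula. -/
def occursPr (P : ℕ) : Fm → Prop
  | pr p => p = P
  | var _ => False
  | imp A B => A.occursPr P ∨ B.occursPr P
  | box A => A.occursPr P
  | bbox A => A.occursPr P
  | all A => A.occursPr P

/-- ⊥ := ∀X X -/
def bot : Fm := all (var 0)
/-- ¬A := A → ⊥ -/
def neg (A : Fm) : Fm := imp A bot
/-- A ∧ B := ∀X((A → B → X) → X) -/
def conj (A B : Fm) : Fm :=
  all (imp (imp (A.lift 0) (imp (B.lift 0) (var 0))) (var 0))
/-- A ∨ B := ∀X((A → X) → (B → X) → X) -/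
def disj (A B : Fm) : Fm :=
  all (imp (imp (A.lift 0) (var 0)) (imp (imp (B.lift 0) (var 0)) (var 0)))
/-- A ↔ B := (A → B) ∧ (B → A) -/
def iff (A B : Fm) : Fm := conj (imp A B) (imp B A)
/-- ◊A := ∀X(□(A → ■X) → X) -/
def dia (A : Fm) : Fm :=
  all (imp (box (imp (A.lift 0) (bbox (var 0)))) (var 0))
/-- ◆A := ∀X(■(A → □X) → X) -/
def bdia (A : Fm) : Fm :=
  all (imp (bbox (imp (A.lift 0) (box (var 0)))) (var 0))

end Fm

/-- IKt2 over the diamond-free language: IPL2 with full comprehension,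
□/■-distribution and necessitation, and the adjunction axioms ◆□A → A and
A → □◆A, with ◊A := ∀X(□(A→■X)→X) and ◆A := ∀X(■(A→□X)→X). -/
inductive ProvR : Fm → Prop where
  | axK (A B : Fm) : ProvR (A.imp (B.imp A))
  | axS (A B C : Fm) :
      ProvR ((A.imp (B.imp C)).imp ((A.imp B).imp (A.imp C)))
  | axAllFun (A B : Fm) :
      ProvR ((Fm.all (A.imp B)).imp ((Fm.all A).imp (Fm.all B)))
  | axV (A : Fm) : ProvR (A.imp (Fm.all (A.lift 0)))
  | axC (A C : Fm) : ProvR ((Fm.all A).imp (A.inst C))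
  | mp {A B : Fm} : ProvR (A.imp B) → ProvR A → ProvR B
  | gen {A : Fm} {P : ℕ} :
      ProvR (A.inst (Fm.pr P)) → ¬ (Fm.all A).occursPr P → ProvR (Fm.all A)
  | axBoxFun (A B : Fm) :
      ProvR ((Fm.box (A.imp B)).imp ((Fm.box A).imp (Fm.box B)))
  | axBboxFun (A B : Fm) :
      ProvR ((Fm.bbox (A.imp B)).imp ((Fm.bbox A).imp (Fm.bbox B)))
  | necBox {A : Fm} : ProvR A → ProvR (Fm.box A)
  | necBbox {A : Fm} : ProvR A → ProvR (Fm.bbox A)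
  | axTenseBdiaBox (A : Fm) : ProvR ((Fm.bdia (Fm.box A)).imp A)
  | axTenseBoxBdia (A : Fm) : ProvR (A.imp (Fm.box (Fm.bdia A)))

namespace Fm

/-- Maximum propositional symbol + 1. -/
def maxPr : Fm → ℕ
  | pr p => p + 1
  | var _ => 0
  | imp A B => max A.maxPr B.maxPr
  | box A => A.maxPr
  | bbox A => A.maxPr
  | all A => A.maxPr

lemma maxPr_lift (X : Fm) : ∀ c, (X.lift c).maxPr = X.maxPr := by
  induction X with
  | pr p => intro c; rfl
  | var n => intro c; simp [lift, maxPr]; split <;> rfl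
  | imp A B ihA ihB => intro c; simp [lift, maxPr, ihA, ihB]
  | box A ih => intro c; simp [lift, maxPr, ih]
  | bbox A ih => intro c; simp [lift, maxPr, ih]
  | all A ih => intro c; simp [lift, maxPr, ih]

lemma occursPr_lt_maxPr {p : ℕ} {X : Fm} (h : X.occursPr p) : p < X.maxPr := by
  induction X with
  | pr q => simp [occursPr] at h; simp [maxPr]; omega
  | var n => simp [occursPr] at h
  | imp A B ihA ihB =>
      rcases h with h | h
      · exact lt_of_lt_of_le (ihA h) (le_max_left _ _)
      · exact lt_of_lt_of_le (ihB h) (le_max_right _ _)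
  | box A ih => exact ih h
  | bbox A ih => exact ih h
  | all A ih => exact ih h

lemma subst_lift (X : Fm) : ∀ (c : ℕ) (C : Fm), (X.lift c).subst c C = X := by
  induction X with
  | pr p => intro c C; rfl
  | var n =>
      intro c C
      by_cases h : n < c
      · simp [lift, subst, h]
      · have h1 : ¬ n + 1 < c := by omega
        have h2 : ¬ n + 1 = c := by omega
        simp [lift, subst, h, h1, h2]
  | imp A B ihA ihB => intro c C; simp [lift, subst, ihA, ihB]
  | box A ih => intro c C; simp [lift, subst, ih]
  | bbox A ih => intro c C; simp [lift, subst, ih]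
  | all A ih => intro c C; simp [lift, subst, ih]

end Fm

open Fm

lemma imp_const {A B : Fm} (h : ProvR B) : ProvR (A.imp B) :=
  ProvR.mp (ProvR.axK _ _) h

lemma appS {A B C : Fm} (h1 : ProvR (A.imp (B.imp C))) (h2 : ProvR (A.imp B)) :
    ProvR (A.imp C) :=
  ProvR.mp (ProvR.mp (ProvR.axS _ _ _) h1) h2

lemma comp {A B C : Fm} (h1 : ProvR (A.imp B)) (h2 : ProvR (B.imp C)) :
    ProvR (A.imp C) :=
  appS (imp_const h2) h1

lemma thmB (X Y Z : Fm) : ProvR ((Y.imp Z).imp ((X.imp Y).imp (X.imp Z))) :=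
  comp (ProvR.axK (Y.imp Z) X) (ProvR.axS X Y Z)

lemma flipP {X Y Z : Fm} (h : ProvR (X.imp (Y.imp Z))) :
    ProvR (Y.imp (X.imp Z)) :=
  comp (ProvR.axK Y X) (ProvR.mp (ProvR.axS _ _ _) h)

/-- From ⊢ X→(Y→Z) (closed) and ⊢ C→(Z→W) get ⊢ C→(X→(Y→W)). -/
lemma comp2 {X Y Z C W : Fm} (g : ProvR (X.imp (Y.imp Z)))
    (h : ProvR (C.imp (Z.imp W))) : ProvR (C.imp (X.imp (Y.imp W))) :=
  appS (comp (comp h (thmB Y Z W)) (thmB X (Y.imp Z) (Y.imp W))) (imp_const g)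

/-- ⊢ ∀(C↑ → D) → (C → ∀D). -/
lemma allImpThm (C D : Fm) :
    ProvR ((Fm.all ((C.lift 0).imp D)).imp (C.imp (Fm.all D))) :=
  comp (ProvR.axAllFun (C.lift 0) D)
    (ProvR.mp (flipP (thmB C (Fm.all (C.lift 0)) (Fm.all D))) (ProvR.axV C))

/-- In IKt2 the distribution axiom □(A→B) → ◊A → ◊B is derivable, where
◊A := ∀X(□(A→■X)→X). -/
theorem dia_functoriality (A B : Fm) :
    ProvR ((Fm.box (A.imp B)).imp ((Fm.dia A).imp (Fm.dia B))) := by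
  classical
  set P : ℕ := max A.maxPr B.maxPr with hP
  set Pf : Fm := Fm.pr P with hPf
  -- body of ◊B
  set bodyB : Fm := (Fm.box ((B.lift 0).imp (Fm.bbox (Fm.var 0)))).imp (Fm.var 0)
    with hbodyB
  set F : Fm :=
    ((Fm.box (A.imp B)).lift 0).imp (((Fm.dia A).lift 0).imp bodyB) with hF
  -- d1 : ◊A → (□(A→■P)→P)
  have d1 : ProvR ((Fm.dia A).imp
      ((Fm.box (A.imp (Fm.bbox Pf))).imp Pf)) := by
    have := ProvR.axC ((Fm.box ((A.lift 0).imp (Fm.bbox (Fm.var 0)))).imp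
      (Fm.var 0)) Pf
    simpa [Fm.dia, Fm.inst, Fm.subst, Fm.subst_lift] using this
  -- d2 : □(A→B) → □(B→■P) → □(A→■P)
  have p0 : ProvR ((A.imp B).imp
      ((B.imp (Fm.bbox Pf)).imp (A.imp (Fm.bbox Pf)))) :=
    flipP (thmB A B (Fm.bbox Pf))
  have d2 : ProvR ((Fm.box (A.imp B)).imp
      ((Fm.box (B.imp (Fm.bbox Pf))).imp (Fm.box (A.imp (Fm.bbox Pf))))) :=
    comp (ProvR.mp (ProvR.axBoxFun _ _) (ProvR.necBox p0)) (ProvR.axBoxFun _ _)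
  -- core : □(A→B) → ◊A → (□(B→■P)→P)
  have core : ProvR ((Fm.box (A.imp B)).imp ((Fm.dia A).imp
      ((Fm.box (B.imp (Fm.bbox Pf))).imp Pf))) :=
    flipP (comp2 d2 d1)
  -- core is the instance F[P/X]
  have hinst : F.inst Pf = (Fm.box (A.imp B)).imp ((Fm.dia A).imp
      ((Fm.box (B.imp (Fm.bbox Pf))).imp Pf)) := by
    simp [hF, hbodyB, Fm.inst, Fm.subst, Fm.subst_lift, Fm.dia]
  -- freshness
  have hfresh : ¬ (Fm.all F).occursPr P := by
    intro h
    have hlt : P < (Fm.all F).maxPr := Fm.occursPr_lt_maxPr h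
    have : (Fm.all F).maxPr ≤ P := by
      simp [hF, hbodyB, Fm.maxPr, Fm.maxPr_lift, Fm.dia, hP]
    omega
  have allF : ProvR (Fm.all F) := by
    refine ProvR.gen ?_ hfresh
    rw [hinst]; exact core
  -- distribute the ∀ over the two (lifted) antecedents
  have step1 : ProvR ((Fm.all ((Fm.box (A.imp B)).lift 0)).imp
      (Fm.all (((Fm.dia A).lift 0).imp bodyB))) :=
    ProvR.mp (ProvR.axAllFun _ _) allF
  have step2 : ProvR ((Fm.box (A.imp B)).imp
      (Fm.all (((Fm.dia A).lift 0).imp bodyB))) :=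
    comp (ProvR.axV _) step1
  have step3 : ProvR ((Fm.box (A.imp B)).imp ((Fm.dia A).imp (Fm.all bodyB))) :=
    comp step2 (allImpThm (Fm.dia A) bodyB)
  have : Fm.dia B = Fm.all bodyB := by simp [Fm.dia, hbodyB]
  rw [this]
  exact step3

end SOTense
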